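/- arXiv:1104.0763 — 2 statements merged into one kernel-verified Lean document; each statement's English description precedes it below -/
import Mathlib

section
/- Fix ρ < 0 and let W_opt(s) = ((ρ−1)/ρ²)·(ρ−1 + (1−2ρ)·s^{−ρ}). For any continuous W : (0,1) → ℝ with ∫₀¹ W(s) ds = 1 and ∫₀¹ W(s)·s^{−ρ} ds = 0, one has ∫₀¹ W(s)² ds = ((ρ−1)/ρ)² + ∫₀¹ (W(s) − W_opt(s))² ds. Hence W_opt is the unique continuous minimizer of ∫₀¹ W² subject to these two constraints, and its minimum value is ((ρ−1)/ρ)² = (1 − 1/ρ)². -/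
/-!
With `φ(s) = s^(-ρ)`, the function `W_opt = a + b φ` is the orthogonal projection of any admissible
`W` onto `span{1, φ}` in `L²(0,1)`: it satisfies the two constraints itself, so
`∫ W W_opt = a ∫ W + b ∫ W φ = a` for every admissible `W`, including `W = W_opt`. Pythagoras gives
`∫ W² = ∫ W_opt² + ∫ (W - W_opt)²` with `∫ W_opt² = a = ((ρ-1)/ρ)²`, and a continuous function
with vanishing `∫ (W - W_opt)²` agrees with `W_opt` on the open interval.
-/

open MeasureTheory Set

section L2

variable {α : Type*} [MeasurableSpace α] {μ : Measure α} {f g φ : α → ℝ}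

lemma integrable_sub_sq (hf : Integrable (fun x => f x ^ 2) μ)
    (hg : Integrable (fun x => g x ^ 2) μ) (hfg : Integrable (fun x => f x * g x) μ) :
    Integrable (fun x => (f x - g x) ^ 2) μ := by
  refine ((hf.sub (hfg.const_mul 2)).add hg).congr (ae_of_all _ fun x => ?_)
  simp only [Pi.add_apply, Pi.sub_apply]
  ring

lemma integral_sub_sq (hf : Integrable (fun x => f x ^ 2) μ)
    (hg : Integrable (fun x => g x ^ 2) μ) (hfg : Integrable (fun x => f x * g x) μ) :
    ∫ x, (f x - g x) ^ 2 ∂μ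
      = ∫ x, f x ^ 2 ∂μ - 2 * ∫ x, f x * g x ∂μ + ∫ x, g x ^ 2 ∂μ := by
  have hexp : (fun x => (f x - g x) ^ 2) = fun x => f x ^ 2 - 2 * (f x * g x) + g x ^ 2 := by
    ext x; ring
  have hf' : Integrable (fun x => f x ^ 2 - 2 * (f x * g x)) μ := hf.sub (hfg.const_mul 2)
  rw [hexp, integral_add hf' hg, integral_sub hf (hfg.const_mul 2), integral_const_mul]

lemma MeasureTheory.Integrable.mul_const_add_mul (hf : Integrable f μ)
    (hfφ : Integrable (fun x => f x * φ x) μ) (a b : ℝ) :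
    Integrable (fun x => f x * (a + b * φ x)) μ := by
  refine ((hf.const_mul a).add (hfφ.const_mul b)).congr (ae_of_all _ fun x => ?_)
  simp only [Pi.add_apply]
  ring

lemma integral_mul_const_add_mul (hf : Integrable f μ)
    (hfφ : Integrable (fun x => f x * φ x) μ) (a b : ℝ) :
    ∫ x, f x * (a + b * φ x) ∂μ = a * ∫ x, f x ∂μ + b * ∫ x, f x * φ x ∂μ := by
  have hexp : (fun x => f x * (a + b * φ x)) = fun x => a * f x + b * (f x * φ x) := by
    ext x; ring
  rw [hexp, integral_add (hf.const_mul a) (hfφ.const_mul b), integral_const_mul,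
    integral_const_mul]

end L2

lemma eqOn_of_setIntegral_sub_sq_nonpos {X : Type*} [TopologicalSpace X] [MeasurableSpace X]
    {μ : Measure X} [μ.IsOpenPosMeasure] {U : Set X} {f g : X → ℝ} (hU : IsOpen U)
    (hf : ContinuousOn f U) (hg : ContinuousOn g U)
    (hint : IntegrableOn (fun x => (f x - g x) ^ 2) U μ)
    (h : ∫ x in U, (f x - g x) ^ 2 ∂μ ≤ 0) : EqOn f g U := by
  have hzero : ∫ x in U, (f x - g x) ^ 2 ∂μ = 0 :=
    le_antisymm h (integral_nonneg fun x => sq_nonneg _)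
  have hae := (integral_eq_zero_iff_of_nonneg (fun x => sq_nonneg _) hint).1 hzero
  refine Measure.eqOn_open_of_ae_eq (μ := μ) ?_ hU hf hg
  filter_upwards [hae] with x hx
  simpa [sub_eq_zero] using hx

lemma integral_Ioo_zero_one_rpow {r : ℝ} (hr : -1 < r) :
    ∫ s in Ioo (0 : ℝ) 1, s ^ r = 1 / (r + 1) := by
  rw [← integral_Ioc_eq_integral_Ioo, ← intervalIntegral.integral_of_le zero_le_one,
    integral_rpow (Or.inl hr), Real.one_rpow, Real.zero_rpow (by linarith)]
  ring

section Wopt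

variable {ρ : ℝ}

noncomputable def wOpt (ρ s : ℝ) : ℝ := ((ρ - 1) / ρ ^ 2) * (ρ - 1 + (1 - 2 * ρ) * s ^ (-ρ))

lemma wOpt_eq (ρ s : ℝ) :
    wOpt ρ s = (ρ - 1) ^ 2 / ρ ^ 2 + (ρ - 1) * (1 - 2 * ρ) / ρ ^ 2 * s ^ (-ρ) := by
  rw [wOpt]; ring

lemma continuousOn_wOpt (ρ : ℝ) : ContinuousOn (wOpt ρ) (Ioo 0 1) := by
  refine continuousOn_const.mul (continuousOn_const.add (continuousOn_const.mul ?_))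
  exact fun s hs => (Real.continuousAt_rpow_const s (-ρ) (Or.inl hs.1.ne')).continuousWithinAt

lemma integrableOn_mul_wOpt {f : ℝ → ℝ} (hf : IntegrableOn f (Ioo 0 1))
    (hfφ : IntegrableOn (fun s => f s * s ^ (-ρ)) (Ioo 0 1)) :
    IntegrableOn (fun s => f s * wOpt ρ s) (Ioo 0 1) := by
  simp only [wOpt_eq]
  exact Integrable.mul_const_add_mul hf hfφ _ _

lemma integral_mul_wOpt {f : ℝ → ℝ} (hf : IntegrableOn f (Ioo 0 1))
    (hfφ : IntegrableOn (fun s => f s * s ^ (-ρ)) (Ioo 0 1))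
    (h1 : ∫ s in Ioo (0 : ℝ) 1, f s = 1) (h2 : ∫ s in Ioo (0 : ℝ) 1, f s * s ^ (-ρ) = 0) :
    ∫ s in Ioo (0 : ℝ) 1, f s * wOpt ρ s = ((ρ - 1) / ρ) ^ 2 := by
  simp only [wOpt_eq]
  rw [integral_mul_const_add_mul hf hfφ, h1, h2]
  ring

lemma integrableOn_rpow_neg (hρ : ρ < 1 / 2) : IntegrableOn (fun s : ℝ => s ^ (-ρ)) (Ioo 0 1) :=
  (intervalIntegral.integrableOn_Ioo_rpow_iff zero_lt_one).2 (by linarith)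

lemma integrableOn_rpow_neg_mul_self (hρ : ρ < 1 / 2) :
    IntegrableOn (fun s : ℝ => s ^ (-ρ) * s ^ (-ρ)) (Ioo 0 1) :=
  ((intervalIntegral.integrableOn_Ioo_rpow_iff zero_lt_one).2
    (by linarith : -1 < -ρ + -ρ)).congr_fun (fun s hs => Real.rpow_add hs.1 _ _) measurableSet_Ioo

lemma integrableOn_wOpt (hρ : ρ < 1 / 2) : IntegrableOn (wOpt ρ) (Ioo 0 1) := by
  simp only [funext (wOpt_eq ρ)]
  exact (integrableOn_const measure_Ioo_lt_top.ne).add ((integrableOn_rpow_neg hρ).const_mul _)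

lemma integrableOn_wOpt_mul_rpow_neg (hρ : ρ < 1 / 2) :
    IntegrableOn (fun s => wOpt ρ s * s ^ (-ρ)) (Ioo 0 1) := by
  simpa only [mul_comm] using
    integrableOn_mul_wOpt (integrableOn_rpow_neg hρ) (integrableOn_rpow_neg_mul_self hρ)

lemma integrableOn_wOpt_sq (hρ : ρ < 1 / 2) : IntegrableOn (fun s => wOpt ρ s ^ 2) (Ioo 0 1) := by
  simpa only [sq] using
    integrableOn_mul_wOpt (integrableOn_wOpt hρ) (integrableOn_wOpt_mul_rpow_neg hρ)

lemma integral_wOpt (hρ0 : ρ ≠ 0) (hρ : ρ < 1 / 2) : ∫ s in Ioo (0 : ℝ) 1, wOpt ρ s = 1 := by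
  simp only [wOpt_eq]
  rw [integral_add (integrable_const _) ((integrableOn_rpow_neg hρ).const_mul _),
    integral_const_mul, integral_Ioo_zero_one_rpow (by linarith), setIntegral_const,
    measureReal_def, Real.volume_Ioo, show -ρ + 1 = 1 - ρ by ring]
  have : 1 - ρ ≠ 0 := by linarith
  simp only [sub_zero, ENNReal.toReal_ofReal zero_le_one, one_smul]
  field_simp
  ring

lemma integral_wOpt_mul_rpow_neg (hρ0 : ρ ≠ 0) (hρ : ρ < 1 / 2) :
    ∫ s in Ioo (0 : ℝ) 1, wOpt ρ s * s ^ (-ρ) = 0 := by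
  have h := integral_mul_const_add_mul (integrableOn_rpow_neg hρ)
    (integrableOn_rpow_neg_mul_self hρ) ((ρ - 1) ^ 2 / ρ ^ 2) ((ρ - 1) * (1 - 2 * ρ) / ρ ^ 2)
  simp only [mul_comm _ (wOpt ρ _), ← wOpt_eq] at h
  rw [h, setIntegral_congr_fun measurableSet_Ioo fun s hs => (Real.rpow_add hs.1 _ _).symm,
    integral_Ioo_zero_one_rpow (by linarith), integral_Ioo_zero_one_rpow (by linarith),
    show -ρ + 1 = 1 - ρ by ring, show -ρ + -ρ + 1 = 1 - 2 * ρ by ring]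
  have : 1 - ρ ≠ 0 := by linarith
  have : 1 - 2 * ρ ≠ 0 := by linarith
  rw [mul_one_div, mul_one_div, div_div, div_div, div_add_div _ _ (by positivity) (by positivity),
    div_eq_zero_iff]
  left
  ring

lemma integral_wOpt_sq (hρ0 : ρ ≠ 0) (hρ : ρ < 1 / 2) :
    ∫ s in Ioo (0 : ℝ) 1, wOpt ρ s ^ 2 = ((ρ - 1) / ρ) ^ 2 := by
  simpa only [sq] using integral_mul_wOpt (integrableOn_wOpt hρ)
    (integrableOn_wOpt_mul_rpow_neg hρ) (integral_wOpt hρ0 hρ) (integral_wOpt_mul_rpow_neg hρ0 hρ)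

end Wopt

theorem stmt_2 (ρ : ℝ) (hρ : ρ < 0) (W : ℝ → ℝ)
    (Wopt : ℝ → ℝ)
    (hWopt : ∀ s, Wopt s = ((ρ - 1) / ρ ^ 2) * (ρ - 1 + (1 - 2 * ρ) * s ^ (-ρ)))
    (hc : ContinuousOn W (Ioo 0 1))
    (hi : IntegrableOn W (Ioo 0 1))
    (hi2 : IntegrableOn (fun s => (W s) ^ 2) (Ioo 0 1))
    (hiρ : IntegrableOn (fun s => W s * s ^ (-ρ)) (Ioo 0 1))
    (h1 : ∫ s in Ioo (0:ℝ) 1, W s = 1)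
    (h2 : ∫ s in Ioo (0:ℝ) 1, W s * s ^ (-ρ) = 0) :
    (∫ s in Ioo (0:ℝ) 1, (W s) ^ 2)
      = ((ρ - 1) / ρ) ^ 2 + ∫ s in Ioo (0:ℝ) 1, (W s - Wopt s) ^ 2 ∧
    ((∫ s in Ioo (0:ℝ) 1, (W s) ^ 2) ≤ ((ρ - 1) / ρ) ^ 2 →
      ∀ s ∈ Ioo (0:ℝ) 1, W s = Wopt s) ∧
    ((ρ - 1) / ρ) ^ 2 = (1 - 1 / ρ) ^ 2 := by
  obtain rfl : Wopt = wOpt ρ := funext hWopt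
  have hρ' : ρ < 1 / 2 := by linarith
  have hWO := integrableOn_mul_wOpt hi hiρ
  have hpyth : ∫ s in Ioo (0:ℝ) 1, (W s - wOpt ρ s) ^ 2
      = (∫ s in Ioo (0:ℝ) 1, W s ^ 2) - ((ρ - 1) / ρ) ^ 2 := by
    rw [integral_sub_sq hi2 (integrableOn_wOpt_sq hρ') hWO, integral_mul_wOpt hi hiρ h1 h2,
      integral_wOpt_sq hρ.ne hρ']
    ring
  refine ⟨by linarith, fun hle => ?_, by rw [one_sub_div hρ.ne]⟩
  exact eqOn_of_setIntegral_sub_sq_nonpos isOpen_Ioo hc (continuousOn_wOpt ρ)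
    (integrable_sub_sq hi2 (integrableOn_wOpt_sq hρ') hWO) (by linarith)
end

section
/- The function h(x) = −(1/log(x/k))·(1/x − 1/k) is decreasing on the interval [1, k) for any real k > 1. -/
/-!
With `w = log (k / x)` the function equals `k⁻¹ * (exp w - 1) / w`, i.e. `k⁻¹` times the slope of the
secant of `exp` between `0` and `w`. By strict convexity of `exp` that slope is strictly increasing
in `w`, and `w` is strictly decreasing in `x`.
-/

open Real Set

theorem strictMonoOn_exp_sub_one_div : StrictMonoOn (fun w : ℝ => (exp w - 1) / w) {0}ᶜ := by
  intro v hv w hw hvw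
  simpa only [exp_zero, sub_zero] using
    strictConvexOn_exp.secant_strict_mono (mem_univ 0) (mem_univ v) (mem_univ w) hv hw hvw

theorem neg_one_div_log_div_mul_eq {k x : ℝ} (hk : 0 < k) (hx : 0 < x) :
    -(1 / log (x / k)) * (1 / x - 1 / k) = k⁻¹ * ((exp (log (k / x)) - 1) / log (k / x)) := by
  rw [exp_log (div_pos hk hx), ← inv_div k x, log_inv]
  field_simp

theorem strictAntiOn_neg_one_div_log_div_mul {k : ℝ} (hk : 0 < k) :
    StrictAntiOn (fun x : ℝ => -(1 / log (x / k)) * (1 / x - 1 / k)) (Ioi 0 \ {k}) := by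
  intro x ⟨hx, hxk⟩ y ⟨hy, hyk⟩ hxy
  have hlog_ne {z : ℝ} (hz : 0 < z) (hzk : z ≠ k) : log (k / z) ≠ 0 :=
    log_ne_zero_of_pos_of_ne_one (div_pos hk hz) fun h => hzk ((div_eq_one_iff_eq hz.ne').1 h).symm
  have hlog_lt : log (k / y) < log (k / x) :=
    log_lt_log (div_pos hk hy) (div_lt_div_of_pos_left hk hx hxy)
  simp only [neg_one_div_log_div_mul_eq hk hx, neg_one_div_log_div_mul_eq hk hy]
  exact mul_lt_mul_of_pos_left
    (strictMonoOn_exp_sub_one_div (hlog_ne hy hyk) (hlog_ne hx hxk) hlog_lt) (inv_pos.2 hk)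

theorem stmt_13 (k : ℝ) (hk : 1 < k) :
    StrictAntiOn (fun x : ℝ => -(1 / Real.log (x / k)) * (1 / x - 1 / k))
      (Set.Ico 1 k) :=
  (strictAntiOn_neg_one_div_log_div_mul (by linarith)).mono
    fun _ ⟨h1x, hxk⟩ => ⟨zero_lt_one.trans_le h1x, hxk.ne⟩
end
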